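/- Let L = ℤ^n and A, B primitive sublattices with (A⊗ℂ) ∩ (B⊗ℂ) = 0. If A + B is also a primitive sublattice of L (i.e., L/(A+B) is torsion-free), then exp_L(A⊗ℂ) ∩ exp_L(B⊗ℂ) = {1}, i.e., the corresponding subtori of (ℂ*)^n intersect only in the identity. -/
import Mathlib

open Complex

/-- The exponential `t ↦ e^{2πit}` as a unit of `ℂ`. -/
noncomputable def expu (t : ℂ) : ℂˣ :=
  Units.mk0 (Complex.exp (2 * Real.pi * Complex.I * t)) (Complex.exp_ne_zero _)

/-- The coordinatewise exponential `exp_L : ℂⁿ → (ℂ*)ⁿ` as a group homomorphism. -/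
noncomputable def expL (n : ℕ) : Multiplicative (Fin n → ℂ) →* (Fin n → ℂˣ) where
  toFun t i := expu (Multiplicative.toAdd t i)
  map_one' := by
    funext i
    apply Units.ext
    simp [expu]
  map_mul' a b := by
    funext i
    apply Units.ext
    simp [expu, mul_add, Complex.exp_add]

/-- Inclusion of the lattice `ℤⁿ` into `ℂⁿ`. -/
def zc {n : ℕ} (v : Fin n → ℤ) : Fin n → ℂ := fun i => (v i : ℂ)

/-- The complexification `A ⊗ ℂ` of a sublattice `A ⊆ ℤⁿ`, as the ℂ-span of `A` in `ℂⁿ`. -/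
noncomputable def VC {n : ℕ} (A : Submodule ℤ (Fin n → ℤ)) : Submodule ℂ (Fin n → ℂ) :=
  Submodule.span ℂ (zc '' (A : Set (Fin n → ℤ)))

/-- The subtorus `exp_L(V)` of `(ℂ*)ⁿ` associated to a ℂ-subspace `V ⊆ ℂⁿ`. -/
noncomputable def expT {n : ℕ} (V : Submodule ℂ (Fin n → ℂ)) : Subgroup (Fin n → ℂˣ) :=
  Subgroup.map (expL n) (AddSubgroup.toSubgroup V.toAddSubgroup)

/-- A sublattice `A ⊆ ℤⁿ` is primitive if `ℤⁿ/A` is torsion-free. -/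
def IsPrimitive {n : ℕ} (A : Submodule ℤ (Fin n → ℤ)) : Prop :=
  ∀ (m : ℤ) (x : Fin n → ℤ), m ≠ 0 → m • x ∈ A → x ∈ A

/-! ### Auxiliary lemmas -/

/-- Inclusion of `ℤⁿ` into `ℚⁿ`. -/
def qz {n : ℕ} (v : Fin n → ℤ) : Fin n → ℚ := fun i => (v i : ℚ)

lemma expu_add (x y : ℂ) : expu (x + y) = expu x * expu y := by
  apply Units.ext
  simp [expu, mul_add, Complex.exp_add]

lemma expu_eq_one_iff (t : ℂ) : expu t = 1 ↔ ∃ k : ℤ, t = k := by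
  rw [Units.ext_iff]
  show Complex.exp _ = 1 ↔ _
  rw [Complex.exp_eq_one_iff]
  constructor
  · rintro ⟨k, hk⟩
    refine ⟨k, mul_left_cancel₀
      (by simp [Real.pi_ne_zero, Complex.I_ne_zero] :
        (2 * (Real.pi:ℂ) * Complex.I) ≠ 0) ?_⟩
    rw [hk]; ring
  · rintro ⟨k, hk⟩
    exact ⟨k, by rw [hk]; ring⟩

lemma qz_add {n : ℕ} (v w : Fin n → ℤ) : qz (v + w) = qz v + qz w := by
  funext i; simp [qz]

lemma qz_zsmul {n : ℕ} (m : ℤ) (v : Fin n → ℤ) : qz (m • v) = m • qz v := by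
  funext i; simp [qz]

lemma rat_span_clear {n : ℕ} (S : Submodule ℤ (Fin n → ℤ)) (x : Fin n → ℚ)
    (hx : x ∈ Submodule.span ℚ (qz '' (S : Set (Fin n → ℤ)))) :
    ∃ m : ℤ, m ≠ 0 ∧ m • x ∈ qz '' (S : Set (Fin n → ℤ)) := by
  induction hx using Submodule.span_induction with
  | mem y hy => exact ⟨1, one_ne_zero, by simpa using hy⟩
  | zero => exact ⟨1, one_ne_zero, ⟨0, S.zero_mem, by funext i; simp [qz]⟩⟩
  | add y z _ _ hy hz =>
      obtain ⟨m₁, hm₁, s₁, hs₁, he₁⟩ := hy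
      obtain ⟨m₂, hm₂, s₂, hs₂, he₂⟩ := hz
      refine ⟨m₁ * m₂, mul_ne_zero hm₁ hm₂, m₂ • s₁ + m₁ • s₂,
        S.add_mem (S.smul_mem _ hs₁) (S.smul_mem _ hs₂), ?_⟩
      rw [qz_add, qz_zsmul, qz_zsmul, he₁, he₂, smul_add]
      rw [smul_smul, smul_smul, mul_comm m₂ m₁]
  | smul r y _ hy =>
      obtain ⟨m, hm, s, hs, he⟩ := hy
      refine ⟨m * r.den, mul_ne_zero hm (by exact_mod_cast r.den_ne_zero), r.num • s,
        S.smul_mem _ hs, ?_⟩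
      rw [qz_zsmul, he]
      have h1 : (m * (r.den:ℤ)) • (r • y) = ((m : ℚ) * r.den * r) • y := by
        rw [← Int.cast_smul_eq_zsmul ℚ, smul_smul]; push_cast; ring_nf
      have h2 : (r.num : ℤ) • (m • y) = ((r.num : ℚ) * m) • y := by
        rw [← Int.cast_smul_eq_zsmul ℚ (r.num), ← Int.cast_smul_eq_zsmul ℚ m, smul_smul]
      rw [h1, h2]
      congr 1
      have hden : (r.den : ℚ) * r = r.num := by
        have h := Rat.num_div_den r
        rw [div_eq_iff (by exact_mod_cast r.den_ne_zero : (r.den:ℚ) ≠ 0)] at h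
        rw [mul_comm]; exact h.symm
      rw [mul_assoc, hden]; ring

lemma mem_rat_span {n : ℕ} (S : Submodule ℤ (Fin n → ℤ)) (v : Fin n → ℤ)
    (hv : zc v ∈ Submodule.span ℂ (zc '' (S : Set (Fin n → ℤ)))) :
    qz v ∈ Submodule.span ℚ (qz '' (S : Set (Fin n → ℤ))) := by
  by_contra hnm
  obtain ⟨f, hf0, hfbot⟩ :=
    Submodule.exists_dual_map_eq_bot_of_notMem hnm inferInstance
  set c : Fin n → ℚ := fun i => f (fun j => if i = j then 1 else 0) with hc
  let F : (Fin n → ℂ) →ₗ[ℂ] ℂ := ∑ i : Fin n, ((c i : ℂ)) • (LinearMap.proj i)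
  have hF : ∀ y : Fin n → ℂ, F y = ∑ i, (c i : ℂ) * y i := by
    intro y
    simp [F, LinearMap.sum_apply]
  have hfs : ∀ w : Fin n → ℚ, f w = ∑ i, w i * c i := by
    intro w
    rw [LinearMap.pi_apply_eq_sum_univ f w]
    simp [hc, smul_eq_mul]
  have hFz : ∀ s : Fin n → ℤ, F (zc s) = ((f (qz s) : ℚ) : ℂ) := by
    intro s
    rw [hF, hfs]
    push_cast [zc, qz]
    exact Finset.sum_congr rfl fun i _ => mul_comm _ _
  have hker : Submodule.span ℂ (zc '' (S : Set (Fin n → ℤ))) ≤ LinearMap.ker F := by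
    rw [Submodule.span_le]
    rintro _ ⟨s, hs, rfl⟩
    have hmem : f (qz s) ∈ Submodule.map f (Submodule.span ℚ (qz '' (S : Set (Fin n → ℤ)))) :=
      ⟨qz s, Submodule.subset_span ⟨s, hs, rfl⟩, rfl⟩
    rw [hfbot, Submodule.mem_bot] at hmem
    simp [LinearMap.mem_ker, hFz s, hmem]
  have := hker hv
  rw [LinearMap.mem_ker, hFz v] at this
  exact hf0 (by exact_mod_cast this)

lemma zc_mem_span_imp {n : ℕ} (S : Submodule ℤ (Fin n → ℤ))
    (hS : IsPrimitive S) (v : Fin n → ℤ)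
    (hv : zc v ∈ Submodule.span ℂ (zc '' (S : Set (Fin n → ℤ)))) : v ∈ S := by
  obtain ⟨m, hm, s, hs, he⟩ := rat_span_clear S (qz v) (mem_rat_span S v hv)
  have hqz : qz s = qz (m • v) := by rw [qz_zsmul]; exact he
  have hsv : s = m • v := by
    funext i
    have h := congrFun hqz i
    simp only [qz, Pi.smul_apply, smul_eq_mul] at h
    exact_mod_cast h
  exact hS m v hm (hsv ▸ hs)

lemma VC_mono {n : ℕ} {S T : Submodule ℤ (Fin n → ℤ)} (h : S ≤ T) : VC S ≤ VC T :=
  Submodule.span_mono (Set.image_mono h)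

/-- If `A, B ⊆ ℤⁿ` are primitive sublattices with `(A⊗ℂ) ∩ (B⊗ℂ) = 0` and `A + B` is
also primitive (i.e. `ℤⁿ/(A+B)` is torsion-free), then the corresponding subtori of
`(ℂ*)ⁿ` intersect only in the identity: `exp_L(A⊗ℂ) ∩ exp_L(B⊗ℂ) = {1}`. -/
theorem stmt_18 (n : ℕ) (A B : Submodule ℤ (Fin n → ℤ))
    (hA : IsPrimitive A) (hB : IsPrimitive B)
    (hAB : VC A ⊓ VC B = ⊥)
    (hsum : IsPrimitive (A ⊔ B)) :
    expT (VC A) ⊓ expT (VC B) = (⊥ : Subgroup (Fin n → ℂˣ)) := by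
  rw [eq_bot_iff]
  rintro g ⟨hgA, hgB⟩
  obtain ⟨a, ha, rfl⟩ := hgA
  obtain ⟨b, hb, hba⟩ := hgB
  set a' : Fin n → ℂ := Multiplicative.toAdd a with ha'
  set b' : Fin n → ℂ := Multiplicative.toAdd b with hb'
  have haA : a' ∈ VC A := ha
  have hbB : b' ∈ VC B := hb
  -- coordinatewise: expu (a' i) = expu (b' i)
  have hcoord : ∀ i, expu (b' i) = expu (a' i) := fun i => congrFun hba i
  have hone : ∀ i, expu (a' i - b' i) = 1 := by
    intro i
    have h1 : expu (a' i - b' i) * expu (b' i) = expu (b' i) := by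
      rw [← expu_add]
      rw [show a' i - b' i + b' i = a' i by ring]
      exact (hcoord i).symm
    have := mul_right_cancel (a := expu (a' i - b' i)) (b := expu (b' i)) (c := 1)
      (by rw [h1, one_mul])
    exact this
  have hex : ∀ i, ∃ k : ℤ, a' i - b' i = k := fun i => (expu_eq_one_iff _).1 (hone i)
  choose v hv using hex
  have hzcv : zc v = a' - b' := by
    funext i
    simp [zc, (hv i).symm]
  have hvAB : zc v ∈ Submodule.span ℂ (zc '' ((A ⊔ B : Submodule ℤ (Fin n → ℤ)) : Set (Fin n → ℤ))) := by
    show zc v ∈ VC (A ⊔ B)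
    rw [hzcv]
    exact Submodule.sub_mem _ (VC_mono le_sup_left haA) (VC_mono le_sup_right hbB)
  have hvmem : v ∈ A ⊔ B := zc_mem_span_imp (A ⊔ B) hsum v hvAB
  obtain ⟨p, hp, q, hq, hpq⟩ := Submodule.mem_sup.1 hvmem
  have hzsum : zc p + zc q = zc v := by
    funext i
    simp [zc, ← hpq]
  have hkey : a' - zc p ∈ VC A ⊓ VC B := by
    constructor
    · exact Submodule.sub_mem _ haA (Submodule.subset_span ⟨p, hp, rfl⟩)
    · have heq : a' - zc p = b' + zc q := by
        have h1 : a' = b' + (zc p + zc q) := by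
          rw [hzsum, hzcv]; abel
        rw [h1]; abel
      rw [heq]
      exact Submodule.add_mem _ hbB (Submodule.subset_span ⟨q, hq, rfl⟩)
  rw [hAB, Submodule.mem_bot, sub_eq_zero] at hkey
  rw [Subgroup.mem_bot]
  funext i
  show expu (a' i) = 1
  rw [(expu_eq_one_iff _).2 ⟨p i, by rw [hkey]; rfl⟩]
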